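/- For every rooted tree τ and all real numbers a, b ≥ 0, one has (a+b)^{|τ|} = Σ_i (τ!/(τ_i^{(1)}! · τ_i^{(2)}!)) · a^{|τ_i^{(1)}|} · b^{|τ_i^{(2)}|}, where the sum runs over the terms τ_i^{(1)} ⊗ τ_i^{(2)} of the (full) Connes–Kreimer coproduct Δτ = Σ_i τ_i^{(1)} ⊗ τ_i^{(2)} and τ! denotes the tree factorial extended multiplicatively to forests. -/

import Mathlib

/-- Rooted trees: `node ts` grafts the trees in `ts` onto a new root. -/
inductive T0 : Type
  | node : List T0 → T0

mutual
/-- Number of vertices of a rooted tree. -/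
def sizeT : T0 → ℕ
  | .node ts => 1 + sizeF ts
/-- Number of vertices of a forest. -/
def sizeF : List T0 → ℕ
  | [] => 0
  | t :: ts => sizeT t + sizeF ts
end

mutual
/-- Tree factorial: `•! = 1`, `[τ₁⋯τₙ]! = |[τ₁⋯τₙ]| · τ₁! ⋯ τₙ!`. -/
def factT : T0 → ℕ
  | .node ts => (1 + sizeF ts) * factF ts
/-- Tree factorial extended multiplicatively to forests. -/
def factF : List T0 → ℕ
  | [] => 1
  | t :: ts => factT t * factF ts
end

mutual
/-- The (full) Connes–Kreimer coproduct of a tree, as the list of its terms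
`τ⁽¹⁾ ⊗ τ⁽²⁾` (pairs of forests, with multiplicity):
`Δτ = 1⊗τ + Σ (B₊ ⊗ id)(Δ(B₋ τ))`, which agrees with the description by
admissible cuts `Δτ = 1⊗τ + τ⊗1 + Σ_c P_c(τ) ⊗ R_c(τ)`. -/
def cop : T0 → List (List T0 × List T0)
  | .node ts => ([], [T0.node ts]) :: (copF ts).map (fun p => ([T0.node p.1], p.2))
/-- The coproduct extended multiplicatively to forests. -/
def copF : List T0 → List (List T0 × List T0)
  | [] => [([], [])]
  | t :: ts => (cop t).flatMap (fun p => (copF ts).map (fun q => (p.1 ++ q.1, p.2 ++ q.2)))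
end

/- ### Auxiliary material -/

mutual
theorem factT_pos (t : T0) : 0 < factT t := by
  match t with
  | .node ts =>
    rw [factT]
    exact Nat.mul_pos (by omega) (factF_pos ts)
theorem factF_pos (ts : List T0) : 0 < factF ts := by
  match ts with
  | [] => simp [factF]
  | t :: ts =>
    rw [factF]
    exact Nat.mul_pos (factT_pos t) (factF_pos ts)
end

theorem sizeF_append (u v : List T0) : sizeF (u ++ v) = sizeF u + sizeF v := by
  induction u with
  | nil => simp [sizeF]
  | cons t ts ih => simp [sizeF, ih]; ring

theorem factF_append (u v : List T0) : factF (u ++ v) = factF u * factF v := by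
  induction u with
  | nil => simp [factF]
  | cons t ts ih => simp [factF, ih]; ring

/-- `φ` evaluated on a forest: `x^{|ts|}/ts!`. -/
noncomputable def phiF (ts : List T0) (x : ℝ) : ℝ := x ^ sizeF ts / (factF ts : ℝ)

/-- `φ` evaluated on a tree: `x^{|t|}/t!`. -/
noncomputable def phiT (t : T0) (x : ℝ) : ℝ := x ^ sizeT t / (factT t : ℝ)

theorem phiF_append (u v : List T0) (x : ℝ) :
    phiF (u ++ v) x = phiF u x * phiF v x := by
  unfold phiF
  rw [sizeF_append, factF_append, pow_add, Nat.cast_mul, div_mul_div_comm]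

theorem phiF_cons (t : T0) (ts : List T0) (x : ℝ) :
    phiF (t :: ts) x = phiT t x * phiF ts x := by
  unfold phiF phiT
  rw [sizeF, factF, pow_add, Nat.cast_mul, div_mul_div_comm]

theorem phiF_nil (x : ℝ) : phiF [] x = 1 := by simp [phiF, sizeF, factF]

theorem phiF_singleton (t : T0) (x : ℝ) : phiF [t] x = phiT t x := by
  rw [show [t] = t :: [] from rfl, phiF_cons, phiF_nil, mul_one]

theorem sum_flatMap_mul {α β : Type*} (l1 : List α) (l2 : List β) (f : α → ℝ) (g : β → ℝ) :
    (l1.flatMap (fun p => l2.map (fun q => f p * g q))).sum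
      = (l1.map f).sum * (l2.map g).sum := by
  induction l1 with
  | nil => simp
  | cons p l1 ih =>
    simp only [List.flatMap_cons, List.sum_append, List.map_cons, List.sum_cons, ih,
      List.sum_map_mul_left]
    ring

theorem hasDerivAt_listSum {ι : Type*} (l : List ι) (f : ι → ℝ → ℝ) (f' : ι → ℝ) (x : ℝ)
    (h : ∀ p ∈ l, HasDerivAt (f p) (f' p) x) :
    HasDerivAt (fun y => (l.map (fun p => f p y)).sum) ((l.map f').sum) x := by
  induction l with
  | nil => simpa using hasDerivAt_const x (0 : ℝ)
  | cons p l ih =>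
    simp only [List.map_cons, List.sum_cons]
    exact (h p List.mem_cons_self).add (ih fun q hq => h q (List.mem_cons_of_mem p hq))

mutual

theorem binT (t : T0) (a b : ℝ) :
    phiT t (a + b) = ((cop t).map fun p => phiF p.1 a * phiF p.2 b).sum := by
  match t with
  | .node ts =>
    have IH : ∀ x y : ℝ, phiF ts (x + y)
        = ((copF ts).map fun p => phiF p.1 x * phiF p.2 y).sum := fun x y => binF ts x y
    -- the per-cut summand as a function of the first variable
    set f : (List T0 × List T0) → ℝ → ℝ :=
      fun p y => phiT (T0.node p.1) y * phiF p.2 b with hf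
    have hFne : ∀ us : List T0, (factF us : ℝ) ≠ 0 := fun us => by
      exact_mod_cast (factF_pos us).ne'
    -- derivative of each summand
    have hd : ∀ (p : List T0 × List T0) (x : ℝ),
        HasDerivAt (f p) (phiF p.1 x * phiF p.2 b) x := by
      intro p x
      have h1 : HasDerivAt (fun y : ℝ => y ^ (1 + sizeF p.1) / (factT (T0.node p.1) : ℝ)
            * phiF p.2 b)
          (((1 + sizeF p.1 : ℕ) : ℝ) * x ^ ((1 + sizeF p.1) - 1) / (factT (T0.node p.1) : ℝ)
            * phiF p.2 b) x :=
        ((hasDerivAt_pow (1 + sizeF p.1) x).div_const _).mul_const _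
      have h2 : ((1 + sizeF p.1 : ℕ) : ℝ) * x ^ ((1 + sizeF p.1) - 1) / (factT (T0.node p.1) : ℝ)
            * phiF p.2 b = phiF p.1 x * phiF p.2 b := by
        have hm : ((1 + sizeF p.1 : ℕ) : ℝ) ≠ 0 := by positivity
        rw [factT, Nat.add_sub_cancel_left, Nat.cast_mul, mul_div_mul_left _ _ hm]
        unfold phiF
        rfl
      rw [h2] at h1
      have : f p = fun y : ℝ => y ^ (1 + sizeF p.1) / (factT (T0.node p.1) : ℝ) * phiF p.2 b := by
        funext y
        simp only [hf, phiT, sizeT]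
      rw [this]
      exact h1
    -- derivative of the left-hand side
    have hl : ∀ x : ℝ, HasDerivAt (fun y : ℝ => phiT (T0.node ts) (y + b)) (phiF ts (x + b)) x := by
      intro x
      have h1 : HasDerivAt (fun y : ℝ => (y + b) ^ (1 + sizeF ts) / (factT (T0.node ts) : ℝ))
          (((1 + sizeF ts : ℕ) : ℝ) * (x + b) ^ ((1 + sizeF ts) - 1) / (factT (T0.node ts) : ℝ)) x := by
        have := (((hasDerivAt_id x).add_const b).pow (1 + sizeF ts)).div_const
          ((factT (T0.node ts) : ℝ))
        simpa using this
      have h2 : ((1 + sizeF ts : ℕ) : ℝ) * (x + b) ^ ((1 + sizeF ts) - 1) / (factT (T0.node ts) : ℝ)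
          = phiF ts (x + b) := by
        have hm : ((1 + sizeF ts : ℕ) : ℝ) ≠ 0 := by positivity
        rw [factT, Nat.add_sub_cancel_left, Nat.cast_mul, mul_div_mul_left _ _ hm]
        unfold phiF
        rfl
      rw [h2] at h1
      have : (fun y : ℝ => phiT (T0.node ts) (y + b))
          = fun y : ℝ => (y + b) ^ (1 + sizeF ts) / (factT (T0.node ts) : ℝ) := by
        funext y
        simp only [phiT, sizeT]
      rw [this]
      exact h1
    -- the difference function is constant
    set H : ℝ → ℝ := fun x =>
      phiT (T0.node ts) (x + b) - ((copF ts).map fun p => f p x).sum with hH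
    have hHd : ∀ x : ℝ, HasDerivAt H 0 x := by
      intro x
      have hs := hasDerivAt_listSum (copF ts) f (fun p => phiF p.1 x * phiF p.2 b) x
        (fun p _ => hd p x)
      have := (hl x).sub hs
      rw [← IH x b] at this
      simp at this
      exact this
    have hconst : H a = H 0 :=
      is_const_of_deriv_eq_zero (fun x => (hHd x).differentiableAt)
        (fun x => (hHd x).deriv) a 0
    have hH0 : H 0 = phiT (T0.node ts) b := by
      have hz : ((copF ts).map fun p => f p 0).sum = 0 := by
        apply List.sum_eq_zero
        intro x hx
        rw [List.mem_map] at hx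
        obtain ⟨p, _, rfl⟩ := hx
        simp only [hf, phiT, sizeT]
        rw [zero_pow (by omega)]
        simp
      have hre : H 0 = phiT (T0.node ts) (0 + b) - ((copF ts).map fun p => f p 0).sum := rfl
      rw [hre, hz, zero_add, sub_zero]
    have key : phiT (T0.node ts) (a + b)
        = phiT (T0.node ts) b + ((copF ts).map fun p => f p a).sum := by
      have := hconst
      rw [hH0] at this
      simp only [hH] at this
      linarith
    -- assemble
    rw [cop]
    simp only [List.map_cons, List.sum_cons, List.map_map, Function.comp]
    rw [key, phiF_nil, phiF_singleton, one_mul]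
    congr 1
    refine congrArg List.sum (List.map_congr_left fun p _ => ?_)
    simp only [hf, Function.comp, phiF_singleton]

theorem binF (ts : List T0) (a b : ℝ) :
    phiF ts (a + b) = ((copF ts).map fun p => phiF p.1 a * phiF p.2 b).sum := by
  match ts with
  | [] => simp [copF, phiF_nil]
  | t :: ts =>
    rw [phiF_cons, binT t a b, binF ts a b, copF]
    rw [← sum_flatMap_mul (cop t) (copF ts)
      (fun p => phiF p.1 a * phiF p.2 b) (fun q => phiF q.1 a * phiF q.2 b)]
    rw [List.map_flatMap]
    refine congrArg List.sum (List.flatMap_congr fun p _ => ?_)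
    rw [List.map_map]
    refine List.map_congr_left fun q _ => ?_
    simp only [Function.comp]
    rw [phiF_append, phiF_append]
    ring

end

/-- Tree binomial formula: for every rooted tree `τ` and `a, b ≥ 0`,
`(a+b)^{|τ|} = Σᵢ (τ!/(τᵢ⁽¹⁾! τᵢ⁽²⁾!)) a^{|τᵢ⁽¹⁾|} b^{|τᵢ⁽²⁾|}`,
the sum running over the terms of the full coproduct `Δτ`. -/
theorem tree_binomial (τ : T0) (a b : ℝ) (ha : 0 ≤ a) (hb : 0 ≤ b) :
    (a + b) ^ (sizeT τ)
      = ((cop τ).map fun p =>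
          (factT τ : ℝ) / ((factF p.1 : ℝ) * (factF p.2 : ℝ))
            * a ^ (sizeF p.1) * b ^ (sizeF p.2)).sum := by
  have h := binT τ a b
  have hτ : (factT τ : ℝ) ≠ 0 := by exact_mod_cast (factT_pos τ).ne'
  have h2 : (a + b) ^ (sizeT τ)
      = (factT τ : ℝ) * ((cop τ).map fun p => phiF p.1 a * phiF p.2 b).sum := by
    rw [← h]
    unfold phiT
    field_simp
  rw [h2, ← List.sum_map_mul_left]
  congr 1
  apply List.map_congr_left
  intro p _
  have h1 : (factF p.1 : ℝ) ≠ 0 := by exact_mod_cast (factF_pos p.1).ne'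
  have hr : (factF p.2 : ℝ) ≠ 0 := by exact_mod_cast (factF_pos p.2).ne'
  unfold phiF
  field_simp
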